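/- A binary phylogenetic network in which every blob has level 1 (i.e., a level-1 network) is tree-child if and only if no reticulation node has a reticulation node as a child; moreover, every binary level-1 network is orchard. -/

import Mathlib

/-- A (directed) phylogenetic-network-like graph on a finite set of
natural-number labelled vertices. -/
structure PNet where
  verts : Finset ℕ
  adj : ℕ → ℕ → Prop
  adjDec : DecidableRel adj
  adj_mem : ∀ u v, adj u v → u ∈ verts ∧ v ∈ verts

attribute [instance] PNet.adjDec

namespace PNet

/-- In-degree of a vertex. -/
def indeg (N : PNet) (v : ℕ) : ℕ := (N.verts.filter fun u => N.adj u v).card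

/-- Out-degree of a vertex. -/
def outdeg (N : PNet) (v : ℕ) : ℕ := (N.verts.filter fun w => N.adj v w).card

/-- A leaf is a vertex of out-degree 0. -/
def IsLeaf (N : PNet) (v : ℕ) : Prop := v ∈ N.verts ∧ N.outdeg v = 0

/-- A reticulation node is a vertex of in-degree 2. -/
def IsRetic (N : PNet) (v : ℕ) : Prop := v ∈ N.verts ∧ N.indeg v = 2

/-- A root is a vertex of in-degree 0. -/
def IsRoot (N : PNet) (v : ℕ) : Prop := v ∈ N.verts ∧ N.indeg v = 0

/-- The digraph is acyclic. -/
def Acyclic (N : PNet) : Prop := ∀ v, ¬ Relation.TransGen N.adj v v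

/-- A binary (rooted) phylogenetic network: acyclic, a root of in-degree 0 and
out-degree 2 from which all vertices are reachable, and every other vertex is a
tree node (in 1, out 2), a reticulation node (in 2, out 1) or a leaf (in 1, out 0). -/
def IsBinary (N : PNet) : Prop :=
  N.Acyclic ∧ ∃ ρ, N.IsRoot ρ ∧ N.outdeg ρ = 2 ∧
    (∀ v ∈ N.verts, Relation.ReflTransGen N.adj ρ v) ∧
    (∀ v ∈ N.verts, v ≠ ρ →
      (N.indeg v = 1 ∧ N.outdeg v = 2) ∨ (N.indeg v = 2 ∧ N.outdeg v = 1) ∨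
      (N.indeg v = 1 ∧ N.outdeg v = 0))

/-- Tree-child: every internal node has a child that is not a reticulation. -/
def TreeChild (N : PNet) : Prop :=
  ∀ v ∈ N.verts, N.outdeg v ≠ 0 → ∃ c, N.adj v c ∧ N.indeg c ≠ 2

/-- Stack-free: no edge joins two reticulation nodes. -/
def StackFree (N : PNet) : Prop :=
  ∀ u v, N.adj u v → ¬ (N.indeg u = 2 ∧ N.indeg v = 2)

end PNet

namespace PNet

/-- Underlying undirected adjacency. -/
def USym (N : PNet) (u v : ℕ) : Prop := N.adj u v ∨ N.adj v u

/-- An (undirected) edge `{a,b}` is a cut edge if its endpoints are not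
connected in the underlying undirected graph with that edge removed. -/
def IsCutEdge (N : PNet) (a b : ℕ) : Prop :=
  N.USym a b ∧
    ¬ Relation.ReflTransGen
        (fun u v => N.USym u v ∧ ¬ ((u = a ∧ v = b) ∨ (u = b ∧ v = a))) a b

/-- Adjacency within cut-edge-free parts of the underlying undirected graph. -/
def BlobAdj (N : PNet) (u v : ℕ) : Prop := N.USym u v ∧ ¬ N.IsCutEdge u v

/-- The maximal cut-edge-free connected subgraph containing `v`. -/
def BlobOf (N : PNet) (v : ℕ) : Set ℕ :=
  {u | u ∈ N.verts ∧ Relation.ReflTransGen N.BlobAdj v u}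

/-- The blobs of `N`: maximal connected cut-edge-free subgraphs with at least
two nodes. -/
def Blobs (N : PNet) : Set (Set ℕ) :=
  {B | ∃ v ∈ N.verts, B = N.BlobOf v ∧ 2 ≤ B.ncard}

/-- The level of a blob: the number of reticulation nodes it contains. -/
noncomputable def blobLevel (N : PNet) (B : Set ℕ) : ℕ := Set.ncard {v ∈ B | N.IsRetic v}

end PNet

namespace PNet

/-- Cherry reduction: for a cherry `(x,y)` (two leaves with common parent `p`),
delete `y` and suppress the resulting degree-two node `p` (when `p` is not the
root). -/
def CherryPick (N N' : PNet) : Prop :=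
  ∃ x y p, x ≠ y ∧ N.IsLeaf x ∧ N.IsLeaf y ∧ N.adj p x ∧ N.adj p y ∧
    ((N.indeg p = 0 ∧ N'.verts = N.verts \ {y} ∧
        ∀ u v, N'.adj u v ↔ (N.adj u v ∧ v ≠ y)) ∨
     (∃ q, N.adj q p ∧ N'.verts = N.verts \ {y, p} ∧
        ∀ u v, N'.adj u v ↔
          ((N.adj u v ∧ u ≠ p ∧ v ≠ p ∧ v ≠ y) ∨ (u = q ∧ v = x))))

/-- Reticulated cherry reduction: leaves `x` and `y`, the parent `w` of `x` is
a reticulation, and a tree node `p` is a common parent of `y` and `w`.  Delete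
the hybrid edge `(p,w)` and suppress the resulting degree-two nodes. -/
def RetCherryPick (N N' : PNet) : Prop :=
  ∃ x y w p, x ≠ y ∧ N.IsLeaf x ∧ N.IsLeaf y ∧
    N.adj w x ∧ N.indeg w = 2 ∧ N.adj p w ∧ N.adj p y ∧ N.indeg p ≤ 1 ∧
    ∃ q', q' ≠ p ∧ N.adj q' w ∧
    ((N.indeg p = 0 ∧ N'.verts = N.verts \ {w} ∧
        ∀ u v, N'.adj u v ↔
          ((N.adj u v ∧ u ≠ w ∧ v ≠ w) ∨ (u = q' ∧ v = x))) ∨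
     (∃ q, N.adj q p ∧ N'.verts = N.verts \ {w, p} ∧
        ∀ u v, N'.adj u v ↔
          ((N.adj u v ∧ u ≠ w ∧ v ≠ w ∧ u ≠ p ∧ v ≠ p) ∨
            (u = q' ∧ v = x) ∨ (u = q ∧ v = y))))

/-- One cherry or reticulated-cherry reduction step. -/
def Reduce (N N' : PNet) : Prop := N.CherryPick N' ∨ N.RetCherryPick N'

/-- The trivial network: a root with a single leaf child. -/
def IsTrivialNet (T : PNet) : Prop :=
  ∃ r l, r ≠ l ∧ T.verts = {r, l} ∧ ∀ u v, (T.adj u v ↔ (u = r ∧ v = l))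

/-- Orchard: reducible to the trivial network by cherry and
reticulated-cherry reductions. -/
def Orchard (N : PNet) : Prop :=
  ∃ T, IsTrivialNet T ∧ Relation.ReflTransGen Reduce N T

end PNet

/-!
The two in-edges of a reticulation lie on a cycle of the underlying undirected graph (both
parents are reached from the root along paths avoiding the reticulation), so a reticulation
shares its blob with its parents. A stack, or a tree node with two reticulation children, would
therefore put two reticulations into one blob: binary level-1 networks are tree-child, and
binary tree-child networks have no stacks.

Binary tree-child networks are orchard. Below a lowest tree node there are only leaves and
reticulations, which forces a cherry or a reticulated cherry there. Picking it deletes a leaf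
or a reticulation edge and suppresses the vertices left with in- and out-degree one; every
surviving vertex keeps its degrees, so the smaller network is again binary and tree-child.
-/

open Relation

theorem wellFounded_of_acyclic {α : Type*} {r : α → α → Prop} (s : Finset α)
    (hs : ∀ a b, r a b → a ∈ s) (hr : ∀ a, ¬ TransGen r a a) : WellFounded r := by
  classical
  refine Subrelation.wf (fun {a b} hab => ?_)
    (measure fun b => (s.filter (TransGen r · b)).card).wf
  refine Finset.card_lt_card ⟨fun c hc => ?_, fun hsub => ?_⟩
  · simp only [Finset.mem_filter] at hc ⊢
    exact ⟨hc.1, hc.2.tail hab⟩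
  · exact hr a (Finset.mem_filter.mp (hsub (Finset.mem_filter.mpr ⟨hs a b hab, .single hab⟩))).2

namespace PNet

variable {N N' : PNet} {a b d p q q' r u v w x y : ℕ}

def parents (N : PNet) (v : ℕ) : Finset ℕ := N.verts.filter (N.adj · v)

def children (N : PNet) (u : ℕ) : Finset ℕ := N.verts.filter (N.adj u ·)

lemma mem_verts_of_adj_left (h : N.adj u v) : u ∈ N.verts := (N.adj_mem u v h).1

lemma mem_verts_of_adj_right (h : N.adj u v) : v ∈ N.verts := (N.adj_mem u v h).2

@[simp] lemma mem_parents : u ∈ N.parents v ↔ N.adj u v := by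
  simpa [parents] using fun h => mem_verts_of_adj_left h

@[simp] lemma mem_children : v ∈ N.children u ↔ N.adj u v := by
  simpa [children] using fun h => mem_verts_of_adj_right h

lemma indeg_eq_card_parents : N.indeg v = (N.parents v).card := rfl

lemma outdeg_eq_card_children : N.outdeg u = (N.children u).card := rfl

lemma indeg_ne_zero_of_adj (h : N.adj u v) : N.indeg v ≠ 0 :=
  Finset.card_ne_zero.mpr ⟨u, mem_parents.mpr h⟩

lemma outdeg_ne_zero_of_adj (h : N.adj u v) : N.outdeg u ≠ 0 :=
  Finset.card_ne_zero.mpr ⟨v, mem_children.mpr h⟩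

lemma exists_adj_of_indeg_ne_zero (h : N.indeg v ≠ 0) : ∃ u, N.adj u v := by
  obtain ⟨u, hu⟩ := Finset.card_ne_zero.mp h
  exact ⟨u, mem_parents.mp hu⟩

lemma exists_adj_of_outdeg_ne_zero (h : N.outdeg u ≠ 0) : ∃ v, N.adj u v := by
  obtain ⟨v, hv⟩ := Finset.card_ne_zero.mp h
  exact ⟨v, mem_children.mp hv⟩

lemma adj_iff_of_indeg_eq_one (h : N.indeg v = 1) (hu : N.adj u v) :
    ∀ a, N.adj a v ↔ a = u := by
  obtain ⟨b, hb⟩ := Finset.card_eq_one.mp (indeg_eq_card_parents ▸ h)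
  have key : ∀ a, N.adj a v ↔ a = b := by simpa [Finset.ext_iff] using hb
  simpa [(key u).mp hu] using key

lemma adj_iff_of_outdeg_eq_one (h : N.outdeg u = 1) (hv : N.adj u v) :
    ∀ a, N.adj u a ↔ a = v := by
  obtain ⟨b, hb⟩ := Finset.card_eq_one.mp (outdeg_eq_card_children ▸ h)
  have key : ∀ a, N.adj u a ↔ a = b := by simpa [Finset.ext_iff] using hb
  simpa [(key v).mp hv] using key

lemma exists_adj_ne_of_indeg_eq_two (h : N.indeg v = 2) (u : ℕ) :
    ∃ a, a ≠ u ∧ N.adj a v := by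
  obtain ⟨a, ha, hau⟩ := Finset.exists_mem_ne (by rw [← indeg_eq_card_parents, h]; omega) u
  exact ⟨a, hau, mem_parents.mp ha⟩

lemma exists_adj_ne_of_outdeg_eq_two (h : N.outdeg u = 2) (v : ℕ) :
    ∃ a, a ≠ v ∧ N.adj u a := by
  obtain ⟨a, ha, hav⟩ := Finset.exists_mem_ne (by rw [← outdeg_eq_card_children, h]; omega) v
  exact ⟨a, hav, mem_children.mp ha⟩

lemma adj_iff_of_outdeg_eq_two (h : N.outdeg u = 2) (hv : N.adj u v) (hw : N.adj u w)
    (hvw : v ≠ w) : ∀ a, N.adj u a ↔ a = v ∨ a = w := by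
  have : N.children u = {v, w} :=
    (Finset.eq_of_subset_of_card_le (by simp [Finset.insert_subset_iff, hv, hw])
      (by rw [← outdeg_eq_card_children, h, Finset.card_pair hvw])).symm
  simpa [Finset.ext_iff] using this

lemma adj_iff_of_indeg_eq_two (h : N.indeg w = 2) (hu : N.adj u w) (hv : N.adj v w)
    (huv : u ≠ v) : ∀ a, N.adj a w ↔ a = u ∨ a = v := by
  have : N.parents w = {u, v} :=
    (Finset.eq_of_subset_of_card_le (by simp [Finset.insert_subset_iff, hu, hv])
      (by rw [← indeg_eq_card_parents, h, Finset.card_pair huv])).symm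
  simpa [Finset.ext_iff] using this

lemma IsBinary.degrees (h : N.IsBinary) (hv : v ∈ N.verts) :
    (N.indeg v = 0 ∧ N.outdeg v = 2) ∨ (N.indeg v = 1 ∧ N.outdeg v = 2) ∨
      (N.indeg v = 2 ∧ N.outdeg v = 1) ∨ (N.indeg v = 1 ∧ N.outdeg v = 0) := by
  obtain ⟨-, ρ, hρ, hρout, -, hclass⟩ := h
  by_cases hvρ : v = ρ
  · exact .inl (hvρ ▸ ⟨hρ.2, hρout⟩)
  · exact .inr (hclass v hv hvρ)

lemma IsBinary.indeg_eq_one_of_isLeaf (hbin : N.IsBinary) (hx : N.IsLeaf x) : N.indeg x = 1 := by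
  have := hbin.degrees hx.1
  have := hx.2
  omega

lemma IsBinary.eq_root (h : N.IsBinary) {ρ : ℕ} (hρ : N.IsRoot ρ) (hv : N.IsRoot v) :
    v = ρ := by
  obtain ⟨-, ρ', hρ', -, -, hclass⟩ := h
  have key : ∀ z, N.IsRoot z → z = ρ' := fun z hz => by
    by_contra hne
    have := hclass z hz.1 hne
    have := hz.2
    omega
  rw [key v hv, key ρ hρ]

lemma Acyclic.ne_of_adj (hA : N.Acyclic) (h : N.adj u v) : u ≠ v := by
  rintro rfl
  exact hA u (.single h)

lemma Acyclic.not_reflTransGen_of_adj (hA : N.Acyclic) (h : N.adj u v) :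
    ¬ ReflTransGen N.adj v u :=
  fun hvu => hA v (.trans_right hvu (.single h))

lemma Acyclic.wellFounded_adj (hA : N.Acyclic) : WellFounded N.adj :=
  wellFounded_of_acyclic N.verts (fun _ _ h => mem_verts_of_adj_left h) hA

lemma Acyclic.wellFounded_swap_adj (hA : N.Acyclic) : WellFounded (Function.swap N.adj) :=
  wellFounded_of_acyclic N.verts (fun _ _ h => mem_verts_of_adj_right h)
    (fun a h => hA a (transGen_swap.mp h))

lemma Acyclic.reflTransGen_of_indeg_ne_zero (hA : N.Acyclic) {ρ : ℕ}
    (h : ∀ v ∈ N.verts, v ≠ ρ → N.indeg v ≠ 0) : ∀ v ∈ N.verts, ReflTransGen N.adj ρ v := by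
  intro v
  induction v using hA.wellFounded_adj.induction with
  | _ v ih =>
    intro hv
    by_cases hvρ : v = ρ
    · exact hvρ ▸ .refl
    · obtain ⟨u, hu⟩ := exists_adj_of_indeg_ne_zero (h v hv hvρ)
      exact (ih u hu (mem_verts_of_adj_left hu)).tail hu

def USymAvoiding (N : PNet) (a b : ℕ) (x y : ℕ) : Prop :=
  N.USym x y ∧ ¬ ((x = a ∧ y = b) ∨ (x = b ∧ y = a))

lemma uSymAvoiding_comm : N.USymAvoiding a b x y ↔ N.USymAvoiding b a x y := by
  simp only [USymAvoiding, or_comm]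

lemma USymAvoiding.symm (h : N.USymAvoiding a b x y) : N.USymAvoiding a b y x :=
  ⟨h.1.symm, fun h' => h.2 (by tauto)⟩

lemma reflTransGen_uSymAvoiding_symm
    (h : ReflTransGen (N.USymAvoiding a b) x y) : ReflTransGen (N.USymAvoiding a b) y x :=
  ReflTransGen.mono (fun _ _ h => USymAvoiding.symm h) _ _ (reflTransGen_swap.mpr h)

lemma isCutEdge_iff : N.IsCutEdge u v ↔ N.USym u v ∧ ¬ ReflTransGen (N.USymAvoiding u v) u v :=
  Iff.rfl

lemma isCutEdge_comm : N.IsCutEdge u v ↔ N.IsCutEdge v u := by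
  have hsymm : N.USym u v ↔ N.USym v u := ⟨Or.symm, Or.symm⟩
  have hrel : N.USymAvoiding v u = N.USymAvoiding u v := by
    ext; exact uSymAvoiding_comm
  rw [isCutEdge_iff, isCutEdge_iff, hrel, hsymm]
  exact and_congr_right fun _ => not_congr ⟨reflTransGen_uSymAvoiding_symm,
    reflTransGen_uSymAvoiding_symm⟩

lemma reflTransGen_uSymAvoiding_of_not_reach {ρ z : ℕ} (hz : ReflTransGen N.adj ρ z)
    (hvz : ¬ ReflTransGen N.adj v z) : ReflTransGen (N.USymAvoiding u v) ρ z := by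
  induction hz with
  | refl => exact .refl
  | @tail b c _ hbc ih =>
    have hvb : ¬ ReflTransGen N.adj v b := fun h => hvz (h.tail hbc)
    refine (ih hvb).tail ⟨.inl hbc, ?_⟩
    rintro (⟨-, rfl⟩ | ⟨rfl, -⟩)
    exacts [hvz .refl, hvb .refl]

/-- With `q` the other parent of `v`, the cycle `u ⇜ ρ ⇝ q → v` avoids the edge `{u, v}`. -/
lemma not_isCutEdge_of_indeg_eq_two (hbin : N.IsBinary) (huv : N.adj u v)
    (hv : N.indeg v = 2) : ¬ N.IsCutEdge u v := by
  obtain ⟨hA, ρ, -, -, hreach, -⟩ := hbin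
  obtain ⟨q, hqu, hqv⟩ := exists_adj_ne_of_indeg_eq_two hv u
  have hρu := reflTransGen_uSymAvoiding_of_not_reach (u := u)
    (hreach u (mem_verts_of_adj_left huv)) (hA.not_reflTransGen_of_adj huv)
  have hρq := reflTransGen_uSymAvoiding_of_not_reach (u := u)
    (hreach q (mem_verts_of_adj_left hqv)) (hA.not_reflTransGen_of_adj hqv)
  have hqv' : N.USymAvoiding u v q v :=
    ⟨.inl hqv, by rintro (⟨rfl, -⟩ | ⟨rfl, -⟩); exacts [hqu rfl, hA.ne_of_adj hqv rfl]⟩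
  exact fun hcut => hcut.2 (((reflTransGen_uSymAvoiding_symm hρu).trans hρq).tail hqv')

lemma blobAdj_of_indeg_eq_two (hbin : N.IsBinary) (huv : N.adj u v) (hv : N.indeg v = 2) :
    N.BlobAdj u v ∧ N.BlobAdj v u :=
  ⟨⟨.inl huv, not_isCutEdge_of_indeg_eq_two hbin huv hv⟩,
    ⟨.inr huv, isCutEdge_comm.not.mp (not_isCutEdge_of_indeg_eq_two hbin huv hv)⟩⟩

lemma not_reflTransGen_blobAdj_of_level_le_one (hlvl : ∀ B ∈ N.Blobs, N.blobLevel B ≤ 1)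
    (hu : N.IsRetic u) (hv : N.IsRetic v) (huv : u ≠ v) : ¬ ReflTransGen N.BlobAdj u v := by
  intro hconn
  have hfin : (N.BlobOf u).Finite := N.verts.finite_toSet.subset fun _ h => h.1
  have hsub : ({u, v} : Set ℕ) ⊆ {z ∈ N.BlobOf u | N.IsRetic z} := by
    rintro z (rfl | rfl)
    exacts [⟨⟨hu.1, .refl⟩, hu⟩, ⟨⟨hv.1, hconn⟩, hv⟩]
  have hlevel := Set.ncard_le_ncard hsub (hfin.subset fun _ h => h.1)
  have hblob : N.BlobOf u ∈ N.Blobs := ⟨u, hu.1, rfl,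
    (Set.ncard_pair huv).symm.le.trans (Set.ncard_le_ncard (hsub.trans fun _ h => h.1) hfin)⟩
  have := hlvl _ hblob
  rw [Set.ncard_pair huv] at hlevel
  exact absurd (hlevel.trans this) (by norm_num)

theorem treeChild_of_level_le_one (hbin : N.IsBinary)
    (hlvl : ∀ B ∈ N.Blobs, N.blobLevel B ≤ 1) : N.TreeChild := by
  intro v hv hout
  by_contra! hret
  obtain ⟨c, hc⟩ := exists_adj_of_outdeg_ne_zero hout
  have hcret : N.IsRetic c := ⟨mem_verts_of_adj_right hc, hret c hc⟩
  have two_children : N.outdeg v ≠ 2 := fun h2 => by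
    obtain ⟨c', hc'c, hc'⟩ := exists_adj_ne_of_outdeg_eq_two h2 c
    exact not_reflTransGen_blobAdj_of_level_le_one hlvl hcret
      ⟨mem_verts_of_adj_right hc', hret c' hc'⟩ hc'c.symm
      ((ReflTransGen.single (blobAdj_of_indeg_eq_two hbin hc (hret c hc)).2).tail
        (blobAdj_of_indeg_eq_two hbin hc' (hret c' hc')).1)
  rcases hbin.degrees hv with ⟨-, h2⟩ | ⟨-, h2⟩ | ⟨hv2, -⟩ | ⟨-, h0⟩
  · exact two_children h2
  · exact two_children h2
  · exact not_reflTransGen_blobAdj_of_level_le_one hlvl ⟨hv, hv2⟩ hcret (hbin.1.ne_of_adj hc)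
      (.single (blobAdj_of_indeg_eq_two hbin hc (hret c hc)).1)
  · exact hout h0

theorem TreeChild.stackFree (hbin : N.IsBinary) (htc : N.TreeChild) : N.StackFree := by
  rintro u v huv ⟨hu, hv⟩
  have hu1 : N.outdeg u = 1 := by
    have := hbin.degrees (mem_verts_of_adj_left huv); omega
  obtain ⟨c, huc, hc⟩ := htc u (mem_verts_of_adj_left huv) (outdeg_ne_zero_of_adj huv)
  exact hc ((adj_iff_of_outdeg_eq_one hu1 huv c).mp huc ▸ hv)

def IsCherry (N : PNet) (x y p : ℕ) : Prop :=
  x ≠ y ∧ N.IsLeaf x ∧ N.IsLeaf y ∧ N.adj p x ∧ N.adj p y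

def IsRetCherry (N : PNet) (x y w p : ℕ) : Prop :=
  x ≠ y ∧ N.IsLeaf x ∧ N.IsLeaf y ∧ N.adj w x ∧ N.indeg w = 2 ∧ N.adj p w ∧ N.adj p y

/-- Below a lowest tree node `u` there are only leaves and reticulations; tree-childness
makes one child of `u` a leaf, and the other one a leaf or a reticulation above a leaf. -/
theorem exists_isCherry_or_isRetCherry (hbin : N.IsBinary) (htc : N.TreeChild) :
    (∃ x y p, N.IsCherry x y p) ∨ ∃ x y w p, N.IsRetCherry x y w p := by
  obtain ⟨ρ, hρ, hρout, -⟩ := hbin.2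
  obtain ⟨u, ⟨hu, hu2⟩, hmin⟩ := hbin.1.wellFounded_swap_adj.transGen.has_min
    {v | v ∈ N.verts ∧ N.outdeg v = 2} ⟨ρ, hρ.1, hρout⟩
  have below : ∀ d, TransGen N.adj u d →
      N.IsLeaf d ∨ (N.indeg d = 2 ∧ N.outdeg d = 1) := by
    intro d hd
    obtain ⟨e, -, hed⟩ := TransGen.tail'_iff.mp hd
    have hdv := mem_verts_of_adj_right hed
    have hd0 := indeg_ne_zero_of_adj hed
    have hd2 : N.outdeg d ≠ 2 := fun h => hmin d ⟨hdv, h⟩ (transGen_swap.mpr hd)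
    have := hbin.degrees hdv
    rcases (by omega : N.outdeg d = 0 ∨ (N.indeg d = 2 ∧ N.outdeg d = 1)) with h | h
    exacts [.inl ⟨hdv, h⟩, .inr h]
  obtain ⟨c, huc, hc⟩ := htc u hu (by omega)
  have hc_leaf : N.IsLeaf c := (below c (.single huc)).resolve_right fun h => hc h.1
  obtain ⟨c', hc'c, huc'⟩ := exists_adj_ne_of_outdeg_eq_two hu2 c
  rcases below c' (.single huc') with hc'_leaf | ⟨hc'2, hc'1⟩
  · exact .inl ⟨c, c', u, hc'c.symm, hc_leaf, hc'_leaf, huc, huc'⟩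
  · obtain ⟨x, hc'x, hx2⟩ := htc c' (mem_verts_of_adj_right huc') (by omega)
    have hx_leaf : N.IsLeaf x :=
      (below x (.tail (.single huc') hc'x)).resolve_right fun h => hx2 h.1
    have hxc : x ≠ c := fun h => by
      exact hbin.1.ne_of_adj huc' ((adj_iff_of_indeg_eq_one (hbin.indeg_eq_one_of_isLeaf hc_leaf)
        huc c').mp (h ▸ hc'x)).symm
    exact .inr ⟨x, c, c', u, hxc, hx_leaf, hc_leaf, hc'x, hc'2, huc', huc⟩

def suppress (N : PNet) (d : ℕ) : PNet where
  verts := N.verts.erase d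
  adj u v := u ≠ d ∧ v ≠ d ∧ (N.adj u v ∨ (N.adj u d ∧ N.adj d v))
  adjDec _ _ := inferInstance
  adj_mem u v := by
    rintro ⟨hu, hv, h | ⟨hud, hdv⟩⟩
    · exact ⟨Finset.mem_erase.mpr ⟨hu, mem_verts_of_adj_left h⟩,
        Finset.mem_erase.mpr ⟨hv, mem_verts_of_adj_right h⟩⟩
    · exact ⟨Finset.mem_erase.mpr ⟨hu, mem_verts_of_adj_left hud⟩,
        Finset.mem_erase.mpr ⟨hv, mem_verts_of_adj_right hdv⟩⟩

def deleteEdge (N : PNet) (a b : ℕ) : PNet where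
  verts := N.verts
  adj u v := N.adj u v ∧ ¬ (u = a ∧ v = b)
  adjDec _ _ := inferInstance
  adj_mem u v h := N.adj_mem u v h.1

@[simp] lemma verts_suppress : (N.suppress d).verts = N.verts.erase d := rfl

lemma verts_suppress_suppress : ((N.suppress a).suppress b).verts = N.verts \ {a, b} := by
  ext
  simp only [verts_suppress, Finset.mem_erase, Finset.mem_sdiff, Finset.mem_insert,
    Finset.mem_singleton]
  tauto

lemma suppress_adj_iff :
    (N.suppress d).adj u v ↔ u ≠ d ∧ v ≠ d ∧ (N.adj u v ∨ (N.adj u d ∧ N.adj d v)) := Iff.rfl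

lemma deleteEdge_adj_iff : (N.deleteEdge a b).adj u v ↔ N.adj u v ∧ ¬ (u = a ∧ v = b) :=
  Iff.rfl

lemma transGen_of_suppress_adj (h : (N.suppress d).adj u v) : TransGen N.adj u v := by
  rcases h with ⟨-, -, h | ⟨hud, hdv⟩⟩
  exacts [.single h, .tail (.single hud) hdv]

lemma suppress_adj_iff_of_isLeaf (hd : N.IsLeaf d) :
    (N.suppress d).adj u v ↔ N.adj u v ∧ v ≠ d := by
  have hnd : ∀ z, ¬ N.adj d z := fun z h => outdeg_ne_zero_of_adj h hd.2
  rw [suppress_adj_iff]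
  constructor
  · rintro ⟨-, hv, h | ⟨-, h⟩⟩
    exacts [⟨h, hv⟩, (hnd v h).elim]
  · rintro ⟨h, hv⟩
    exact ⟨fun hu => hnd v (hu ▸ h), hv, .inl h⟩

lemma suppress_adj_iff_of_unique (ha : ∀ z, N.adj z d ↔ z = a) (hb : ∀ z, N.adj d z ↔ z = b)
    (had : a ≠ d) (hbd : b ≠ d) :
    (N.suppress d).adj u v ↔ (N.adj u v ∧ u ≠ d ∧ v ≠ d) ∨ (u = a ∧ v = b) := by
  rw [suppress_adj_iff, ha, hb]
  constructor
  · rintro ⟨hu, hv, h | h⟩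
    exacts [.inl ⟨h, hu, hv⟩, .inr h]
  · rintro (⟨h, hu, hv⟩ | ⟨rfl, rfl⟩)
    exacts [⟨hu, hv, .inl h⟩, ⟨had, hbd, .inr ⟨rfl, rfl⟩⟩]

lemma indeg_suppress_of_isLeaf (hd : N.IsLeaf d) (hv : v ≠ d) :
    (N.suppress d).indeg v = N.indeg v := by
  rw [indeg_eq_card_parents, indeg_eq_card_parents]
  congr 1
  ext z
  simp [suppress_adj_iff_of_isLeaf hd, hv]

lemma outdeg_suppress_of_isLeaf (hd : N.IsLeaf d) (hud : ¬ N.adj u d) :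
    (N.suppress d).outdeg u = N.outdeg u := by
  rw [outdeg_eq_card_children, outdeg_eq_card_children]
  congr 1
  ext z
  simp only [mem_children, suppress_adj_iff_of_isLeaf hd, and_iff_left_iff_imp]
  rintro h rfl
  exact hud h

lemma indeg_suppress_of_unique (ha : ∀ z, N.adj z d ↔ z = a) (hb : ∀ z, N.adj d z ↔ z = b)
    (had : a ≠ d) (hbd : b ≠ d) (hab : ¬ N.adj a b) (hv : v ≠ d) :
    (N.suppress d).indeg v = N.indeg v := by
  rw [indeg_eq_card_parents, indeg_eq_card_parents]
  by_cases hvb : v = b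
  · subst hvb
    have hparents : (N.suppress d).parents v = insert a ((N.parents v).erase d) := by
      ext z
      simp only [mem_parents, suppress_adj_iff_of_unique ha hb had hbd, Finset.mem_insert,
        Finset.mem_erase]
      tauto
    have hdv : d ∈ N.parents v := mem_parents.mpr ((hb v).mpr rfl)
    rw [hparents, Finset.card_insert_of_notMem (by simp [hab]), Finset.card_erase_of_mem hdv,
      Nat.sub_add_cancel (Finset.card_pos.mpr ⟨d, hdv⟩)]
  · congr 1
    ext z
    simp only [mem_parents, suppress_adj_iff_of_unique ha hb had hbd, hvb, and_false, or_false,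
      and_iff_left_iff_imp]
    refine fun h => ⟨?_, hv⟩
    rintro rfl
    exact hvb ((hb v).mp h)

lemma outdeg_suppress_of_unique (ha : ∀ z, N.adj z d ↔ z = a) (hb : ∀ z, N.adj d z ↔ z = b)
    (had : a ≠ d) (hbd : b ≠ d) (hab : ¬ N.adj a b) (hu : u ≠ d) :
    (N.suppress d).outdeg u = N.outdeg u := by
  rw [outdeg_eq_card_children, outdeg_eq_card_children]
  by_cases hua : u = a
  · subst hua
    have hchildren : (N.suppress d).children u = insert b ((N.children u).erase d) := by
      ext z
      simp only [mem_children, suppress_adj_iff_of_unique ha hb had hbd, Finset.mem_insert,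
        Finset.mem_erase]
      tauto
    have hud : d ∈ N.children u := mem_children.mpr ((ha u).mpr rfl)
    rw [hchildren, Finset.card_insert_of_notMem (by simp [hab]), Finset.card_erase_of_mem hud,
      Nat.sub_add_cancel (Finset.card_pos.mpr ⟨d, hud⟩)]
  · congr 1
    ext z
    simp only [mem_children, suppress_adj_iff_of_unique ha hb had hbd, hua, false_and, or_false,
      and_iff_left_iff_imp]
    refine fun h => ⟨hu, ?_⟩
    rintro rfl
    exact hua ((ha u).mp h)

lemma indeg_deleteEdge_of_ne (hv : v ≠ b) : (N.deleteEdge a b).indeg v = N.indeg v := by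
  rw [indeg_eq_card_parents, indeg_eq_card_parents]
  congr 1
  ext z
  simp [deleteEdge_adj_iff, hv]

lemma outdeg_deleteEdge_of_ne (hu : u ≠ a) : (N.deleteEdge a b).outdeg u = N.outdeg u := by
  rw [outdeg_eq_card_children, outdeg_eq_card_children]
  congr 1
  ext z
  simp [deleteEdge_adj_iff, hu]

theorem TreeChild.suppress_of_unique (htc : N.TreeChild) (ha : ∀ z, N.adj z d ↔ z = a)
    (hb : ∀ z, N.adj d z ↔ z = b) (had : a ≠ d) (hbd : b ≠ d) (hab : ¬ N.adj a b)
    (hb2 : N.indeg b ≠ 2) : (N.suppress d).TreeChild := by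
  intro v hv hv0
  obtain ⟨hvd, hv⟩ := Finset.mem_erase.mp hv
  rw [outdeg_suppress_of_unique ha hb had hbd hab hvd] at hv0
  obtain ⟨c, hvc, hc⟩ := htc v hv hv0
  by_cases hcd : c = d
  · obtain rfl := (ha v).mp (hcd ▸ hvc)
    refine ⟨b, (suppress_adj_iff_of_unique ha hb had hbd).mpr (.inr ⟨rfl, rfl⟩), ?_⟩
    rwa [indeg_suppress_of_unique ha hb had hbd hab hbd]
  · refine ⟨c, (suppress_adj_iff_of_unique ha hb had hbd).mpr (.inl ⟨hvc, hvd, hcd⟩), ?_⟩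
    rwa [indeg_suppress_of_unique ha hb had hbd hab hcd]

theorem TreeChild.suppress_of_isLeaf (htc : N.TreeChild) (hd : N.IsLeaf d)
    (h : ∀ u, N.adj u d → ∃ c, c ≠ d ∧ N.adj u c ∧ N.indeg c ≠ 2) :
    (N.suppress d).TreeChild := by
  intro v hv hv0
  obtain ⟨hvd, hv⟩ := Finset.mem_erase.mp hv
  obtain ⟨c, hcd, hvc, hc⟩ : ∃ c, c ≠ d ∧ N.adj v c ∧ N.indeg c ≠ 2 := by
    obtain ⟨c', hvc'⟩ := exists_adj_of_outdeg_ne_zero hv0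
    obtain ⟨c, hvc, hc⟩ :=
      htc v hv (outdeg_ne_zero_of_adj ((suppress_adj_iff_of_isLeaf hd).mp hvc').1)
    by_cases hcd : c = d
    · exact h v (hcd ▸ hvc)
    · exact ⟨c, hcd, hvc, hc⟩
  exact ⟨c, (suppress_adj_iff_of_isLeaf hd).mpr ⟨hvc, hcd⟩,
    (indeg_suppress_of_isLeaf hd hcd).trans_ne hc⟩

theorem TreeChild.deleteEdge (htc : N.TreeChild) (hb : N.indeg b = 2) :
    (N.deleteEdge a b).TreeChild := by
  intro v hv hv0
  obtain ⟨c', hvc'⟩ := exists_adj_of_outdeg_ne_zero hv0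
  obtain ⟨c, hvc, hc⟩ := htc v hv (outdeg_ne_zero_of_adj hvc'.1)
  have hcb : c ≠ b := fun h => hc (h ▸ hb)
  exact ⟨c, ⟨hvc, fun h => hcb h.2⟩, (indeg_deleteEdge_of_ne hcb).trans_ne hc⟩

theorem IsBinary.of_degrees_eq (hN : N.IsBinary) (hsub : N'.verts ⊆ N.verts)
    (hroot : ∀ ρ, N.IsRoot ρ → ρ ∈ N'.verts)
    (hin : ∀ v ∈ N'.verts, N'.indeg v = N.indeg v)
    (hout : ∀ v ∈ N'.verts, N'.outdeg v = N.outdeg v)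
    (hlift : ∀ u v, N'.adj u v → TransGen N.adj u v) : N'.IsBinary := by
  obtain ⟨hA, ρ, hρ, hρout, -, hclass⟩ := hN
  have hρ' := hroot ρ hρ
  have hA' : N'.Acyclic := fun v h => hA v (TransGen.lift' id hlift v v h)
  refine ⟨hA', ρ, ⟨hρ', (hin ρ hρ').trans hρ.2⟩, (hout ρ hρ').trans hρout,
    hA'.reflTransGen_of_indeg_ne_zero fun v hv hvρ => ?_, fun v hv hvρ => ?_⟩
  · have := hclass v (hsub hv) hvρ
    rw [hin v hv]
    omega
  · rw [hin v hv, hout v hv]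
    exact hclass v (hsub hv) hvρ

theorem exists_reduce_of_suppress {M : PNet} (hbin : N.IsBinary) (htcM : M.TreeChild)
    (hred : N.Reduce (M.suppress d)) (hM : M.verts = N.verts.erase r) (hr : N.indeg r ≠ 0)
    (hd : N.indeg d ≠ 0)
    (hin : ∀ v ∈ M.verts, v ≠ d → M.indeg v = N.indeg v)
    (hout : ∀ v ∈ M.verts, v ≠ d → M.outdeg v = N.outdeg v)
    (hlift : ∀ u v, M.adj u v → TransGen N.adj u v)
    (ha : ∀ z, M.adj z d ↔ z = a) (hb : ∀ z, M.adj d z ↔ z = b) (had : a ≠ d) (hbd : b ≠ d)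
    (hab : ¬ M.adj a b) (hb2 : M.indeg b ≠ 2) :
    ∃ N', N.Reduce N' ∧ N'.IsBinary ∧ N'.TreeChild ∧ N'.verts.card < N.verts.card := by
  have hsub : M.verts ⊆ N.verts := hM ▸ Finset.erase_subset r N.verts
  have hdM : d ∈ M.verts := mem_verts_of_adj_left ((hb b).mpr rfl)
  refine ⟨M.suppress d, hred,
    hbin.of_degrees_eq (fun v hv => hsub (Finset.mem_of_mem_erase hv))
      (fun ρ hρ => ?_) (fun v hv => ?_) (fun v hv => ?_)
      (fun u v h => TransGen.lift' id hlift u v (transGen_of_suppress_adj h)),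
    htcM.suppress_of_unique ha hb had hbd hab hb2,
    (Finset.card_erase_lt_of_mem hdM).trans_le (Finset.card_le_card hsub)⟩
  · have := hρ.2
    rw [verts_suppress, hM, Finset.mem_erase, Finset.mem_erase]
    exact ⟨by rintro rfl; omega, by rintro rfl; omega, hρ.1⟩
  · obtain ⟨hvd, hv⟩ := Finset.mem_erase.mp hv
    rw [indeg_suppress_of_unique ha hb had hbd hab hvd, hin v hv hvd]
  · obtain ⟨hvd, hv⟩ := Finset.mem_erase.mp hv
    rw [outdeg_suppress_of_unique ha hb had hbd hab hvd, hout v hv hvd]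

lemma IsLeaf.eq_of_reflTransGen (hx : N.IsLeaf x) (h : ReflTransGen N.adj x y) : y = x := by
  rcases h.cases_head with h | ⟨c, hxc, -⟩
  exacts [h.symm, (outdeg_ne_zero_of_adj hxc hx.2).elim]

lemma IsBinary.degrees_of_adj_of_adj (hbin : N.IsBinary) (hq : N.adj q p) (hpx : N.adj p x)
    (hpy : N.adj p y) (hxy : x ≠ y) : N.indeg p = 1 ∧ N.outdeg p = 2 := by
  have h1 : N.outdeg p ≠ 1 := fun h => hxy ((adj_iff_of_outdeg_eq_one h hpx y).mp hpy).symm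
  have := hbin.degrees (mem_verts_of_adj_left hpx)
  have := indeg_ne_zero_of_adj hq
  have := outdeg_ne_zero_of_adj hpx
  omega

/-- A cherry hanging from the root is the whole network, and picking it leaves the trivial
network. -/
theorem IsCherry.orchard_of_indeg_eq_zero (hbin : N.IsBinary) (hc : N.IsCherry x y p)
    (hp : N.indeg p = 0) : N.Orchard := by
  obtain ⟨hxy, hx, hy, hpx, hpy⟩ := hc
  have hp2 : N.outdeg p = 2 := by
    have := hbin.degrees (mem_verts_of_adj_left hpx); omega
  have hchp := adj_iff_of_outdeg_eq_two hp2 hpx hpy hxy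
  obtain ⟨ρ, hρ, -, hreach, -⟩ := hbin.2
  have hverts : ∀ z ∈ N.verts, z = p ∨ z = x ∨ z = y := by
    intro z hz
    have hpz : ReflTransGen N.adj p z :=
      hbin.eq_root hρ ⟨mem_verts_of_adj_left hpx, hp⟩ ▸ hreach z hz
    rcases hpz.cases_head with h | ⟨c, hpc, hcz⟩
    · exact .inl h.symm
    · rcases (hchp c).mp hpc with rfl | rfl
      exacts [.inr (.inl (hx.eq_of_reflTransGen hcz)), .inr (.inr (hy.eq_of_reflTransGen hcz))]
  have hadj : ∀ u v, (N.suppress y).adj u v ↔ N.adj u v ∧ v ≠ y := fun u v =>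
    suppress_adj_iff_of_isLeaf hy
  refine ⟨N.suppress y, ⟨p, x, hbin.1.ne_of_adj hpx, ?_, fun u v => ?_⟩,
    .single (.inl ⟨x, y, p, hxy, hx, hy, hpx, hpy, .inl ⟨hp, Finset.erase_eq _ _, hadj⟩⟩)⟩
  · ext z
    simp only [verts_suppress, Finset.mem_erase, Finset.mem_insert, Finset.mem_singleton]
    constructor
    · rintro ⟨hzy, hz⟩
      exact (hverts z hz).imp_right (Or.resolve_right · hzy)
    · rintro (rfl | rfl)
      exacts [⟨(hbin.1.ne_of_adj hpy), mem_verts_of_adj_left hpx⟩, ⟨hxy, hx.1⟩]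
  · rw [hadj]
    constructor
    · rintro ⟨huv, hvy⟩
      rcases hverts u (mem_verts_of_adj_left huv) with rfl | rfl | rfl
      · exact ⟨rfl, ((hchp v).mp huv).resolve_right hvy⟩
      · exact (outdeg_ne_zero_of_adj huv hx.2).elim
      · exact (outdeg_ne_zero_of_adj huv hy.2).elim
    · rintro ⟨rfl, rfl⟩
      exact ⟨hpx, hxy⟩

/-- If `p` were the root, the other parent of `w` would lie below `p`, hence below `w`. -/
lemma IsRetCherry.indeg_ne_zero (hbin : N.IsBinary) (hc : N.IsRetCherry x y w p) :
    N.indeg p ≠ 0 := by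
  obtain ⟨-, -, hy, hwx, hw2, hpw, hpy⟩ := hc
  intro hp
  have hwy : w ≠ y := fun h => outdeg_ne_zero_of_adj (h ▸ hwx) hy.2
  have hp2 : N.outdeg p = 2 := by
    have := hbin.degrees (mem_verts_of_adj_left hpw); omega
  obtain ⟨q', hq'p, hq'w⟩ := exists_adj_ne_of_indeg_eq_two hw2 p
  obtain ⟨ρ, hρ, -, hreach, -⟩ := hbin.2
  have hpq' : ReflTransGen N.adj p q' :=
    hbin.eq_root hρ ⟨mem_verts_of_adj_left hpw, hp⟩ ▸ hreach q' (mem_verts_of_adj_left hq'w)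
  rcases hpq'.cases_head with h | ⟨c, hpc, hcq'⟩
  · exact hq'p h.symm
  · rcases (adj_iff_of_outdeg_eq_two hp2 hpw hpy hwy c).mp hpc with rfl | rfl
    · exact hbin.1.not_reflTransGen_of_adj hq'w hcq'
    · exact outdeg_ne_zero_of_adj (hy.eq_of_reflTransGen hcq' ▸ hq'w) hy.2

lemma IsCherry.adj_iff (hbin : N.IsBinary) (hc : N.IsCherry x y p) (hq : N.adj q p) :
    (∀ z, N.adj z p ↔ z = q) ∧ (∀ z, N.adj z x ↔ z = p) ∧ (∀ z, N.adj z y ↔ z = p) ∧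
      (∀ z, N.adj p z ↔ z = x ∨ z = y) := by
  obtain ⟨hxy, hx, hy, hpx, hpy⟩ := hc
  obtain ⟨hp1, hp2⟩ := hbin.degrees_of_adj_of_adj hq hpx hpy hxy
  exact ⟨adj_iff_of_indeg_eq_one hp1 hq,
    adj_iff_of_indeg_eq_one (hbin.indeg_eq_one_of_isLeaf hx) hpx,
    adj_iff_of_indeg_eq_one (hbin.indeg_eq_one_of_isLeaf hy) hpy,
    adj_iff_of_outdeg_eq_two hp2 hpx hpy hxy⟩

lemma IsRetCherry.adj_iff (hbin : N.IsBinary) (hc : N.IsRetCherry x y w p) (hq : N.adj q p)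
    (hq'w : N.adj q' w) (hq'p : q' ≠ p) :
    (∀ z, N.adj z p ↔ z = q) ∧ (∀ z, N.adj z x ↔ z = w) ∧ (∀ z, N.adj z y ↔ z = p) ∧
      (∀ z, N.adj z w ↔ z = p ∨ z = q') ∧ (∀ z, N.adj w z ↔ z = x) ∧
      (∀ z, N.adj p z ↔ z = w ∨ z = y) := by
  obtain ⟨-, hx, hy, hwx, hw2, hpw, hpy⟩ := hc
  have hwy : w ≠ y := fun h => outdeg_ne_zero_of_adj (h ▸ hwx) hy.2
  have hw1 : N.outdeg w = 1 := by
    have := hbin.degrees (mem_verts_of_adj_left hwx); omega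
  obtain ⟨hp1, hp2⟩ := hbin.degrees_of_adj_of_adj hq hpw hpy hwy
  exact ⟨adj_iff_of_indeg_eq_one hp1 hq,
    adj_iff_of_indeg_eq_one (hbin.indeg_eq_one_of_isLeaf hx) hwx,
    adj_iff_of_indeg_eq_one (hbin.indeg_eq_one_of_isLeaf hy) hpy,
    adj_iff_of_indeg_eq_two hw2 hpw hq'w hq'p.symm, adj_iff_of_outdeg_eq_one hw1 hwx,
    adj_iff_of_outdeg_eq_two hp2 hpw hpy hwy⟩

/-- Picking a cherry below a non-root tree node: delete the leaf `y`, then suppress `p`. -/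
theorem IsCherry.exists_reduce (hbin : N.IsBinary) (htc : N.TreeChild)
    (hc : N.IsCherry x y p) (hq : N.adj q p) :
    ∃ N', N.Reduce N' ∧ N'.IsBinary ∧ N'.TreeChild ∧ N'.verts.card < N.verts.card := by
  obtain ⟨hparp, hparx, hpary, hchp⟩ := hc.adj_iff hbin hq
  obtain ⟨hxy, hx, hy, hpx, hpy⟩ := hc
  have hqp : q ≠ p := hbin.1.ne_of_adj hq
  have hpy' : p ≠ y := hbin.1.ne_of_adj hpy
  have hxp : x ≠ p := (hbin.1.ne_of_adj hpx).symm
  have hM : ∀ u v, (N.suppress y).adj u v ↔ N.adj u v ∧ v ≠ y := fun _ _ =>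
    suppress_adj_iff_of_isLeaf hy
  have hparpM : ∀ z, (N.suppress y).adj z p ↔ z = q := fun z => by rw [hM]; grind
  have hchpM : ∀ z, (N.suppress y).adj p z ↔ z = x := fun z => by rw [hM]; grind
  have hqx : ¬ (N.suppress y).adj q x := by rw [hM]; grind
  have hadj : ∀ u v, ((N.suppress y).suppress p).adj u v ↔
      (N.adj u v ∧ u ≠ p ∧ v ≠ p ∧ v ≠ y) ∨ (u = q ∧ v = x) := fun u v => by
    rw [suppress_adj_iff_of_unique hparpM hchpM hqp hxp, hM]
    tauto
  have hx2 : N.indeg x ≠ 2 := by rw [hbin.indeg_eq_one_of_isLeaf hx]; omega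
  exact exists_reduce_of_suppress hbin
    (htc.suppress_of_isLeaf hy fun u hu => ⟨x, hxy, (hpary u).mp hu ▸ hpx, hx2⟩)
    (.inl ⟨x, y, p, hxy, hx, hy, hpx, hpy, .inr ⟨q, hq, verts_suppress_suppress, hadj⟩⟩)
    rfl (indeg_ne_zero_of_adj hpy) (indeg_ne_zero_of_adj hq)
    (fun v hv _ => indeg_suppress_of_isLeaf hy (Finset.ne_of_mem_erase hv))
    (fun v _ hvp => outdeg_suppress_of_isLeaf hy fun h => hvp ((hpary v).mp h))
    (fun u v h => .single ((hM u v).mp h).1) hparpM hchpM hqp hxp hqx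
    (by rwa [indeg_suppress_of_isLeaf hy hxy])

/-- Picking a reticulated cherry: delete the edge `p → w`, then suppress `w` and `p`. -/
theorem IsRetCherry.exists_reduce (hbin : N.IsBinary) (htc : N.TreeChild)
    (hc : N.IsRetCherry x y w p) :
    ∃ N', N.Reduce N' ∧ N'.IsBinary ∧ N'.TreeChild ∧ N'.verts.card < N.verts.card := by
  obtain ⟨q, hq⟩ := exists_adj_of_indeg_ne_zero (hc.indeg_ne_zero hbin)
  obtain ⟨q', hq'p, hq'w⟩ := exists_adj_ne_of_indeg_eq_two hc.2.2.2.2.1 p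
  obtain ⟨hparp, hparx, hpary, hparw, hchw, hchp⟩ := hc.adj_iff hbin hq hq'w hq'p
  obtain ⟨hxy, hx, hy, hwx, hw2, hpw, hpy⟩ := hc
  have hqp : q ≠ p := hbin.1.ne_of_adj hq
  have hq'w' : q' ≠ w := hbin.1.ne_of_adj hq'w
  have hpw' : p ≠ w := hbin.1.ne_of_adj hpw
  have hxw : x ≠ w := (hbin.1.ne_of_adj hwx).symm
  have hxp : x ≠ p := fun h => hbin.1 p (.tail (.single hpw) (h ▸ hwx))
  have hyp : y ≠ p := (hbin.1.ne_of_adj hpy).symm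
  have hyw : y ≠ w := fun h => outdeg_ne_zero_of_adj (h ▸ hwx) hy.2
  have hqw : q ≠ w := fun h => hxp ((hchw p).mp (h ▸ hq)).symm
  set M₁ := N.deleteEdge p w
  have hparwM₁ : ∀ z, M₁.adj z w ↔ z = q' := fun z => by rw [deleteEdge_adj_iff]; grind
  have hchwM₁ : ∀ z, M₁.adj w z ↔ z = x := fun z => by rw [deleteEdge_adj_iff]; grind
  have hq'x : ¬ M₁.adj q' x := fun h => hq'w' ((hparx q').mp h.1)
  have hM : ∀ u v, (M₁.suppress w).adj u v ↔
      (N.adj u v ∧ ¬ (u = p ∧ v = w) ∧ u ≠ w ∧ v ≠ w) ∨ (u = q' ∧ v = x) := fun u v => by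
    rw [suppress_adj_iff_of_unique hparwM₁ hchwM₁ hq'w' hxw, deleteEdge_adj_iff, and_assoc]
  have hparpM : ∀ z, (M₁.suppress w).adj z p ↔ z = q := fun z => by rw [hM]; grind
  have hchpM : ∀ z, (M₁.suppress w).adj p z ↔ z = y := fun z => by rw [hM]; grind
  have hqy : ¬ (M₁.suppress w).adj q y := by rw [hM]; grind
  have hadj : ∀ u v, ((M₁.suppress w).suppress p).adj u v ↔
      (N.adj u v ∧ u ≠ w ∧ v ≠ w ∧ u ≠ p ∧ v ≠ p) ∨ (u = q' ∧ v = x) ∨ (u = q ∧ v = y) :=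
    fun u v => by rw [suppress_adj_iff_of_unique hparpM hchpM hqp hyp, hM]; grind
  have hx1 := hbin.indeg_eq_one_of_isLeaf hx
  have hy1 := hbin.indeg_eq_one_of_isLeaf hy
  refine exists_reduce_of_suppress hbin
    ((htc.deleteEdge hw2).suppress_of_unique hparwM₁ hchwM₁ hq'w' hxw hq'x
      (by rw [indeg_deleteEdge_of_ne hxw]; omega))
    (.inr ⟨x, y, w, p, hxy, hx, hy, hwx, hw2, hpw, hpy,
      (hbin.degrees_of_adj_of_adj hq hpw hpy hyw.symm).1.le,
      q', hq'p, hq'w, .inr ⟨q, hq, verts_suppress_suppress, hadj⟩⟩)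
    rfl (indeg_ne_zero_of_adj hpw) (indeg_ne_zero_of_adj hq) (fun v hv _ => ?_)
    (fun v hv hvp => ?_) (fun u v h => ?_) hparpM hchpM hqp hyp hqy
    (by rw [indeg_suppress_of_unique hparwM₁ hchwM₁ hq'w' hxw hq'x hyw,
      indeg_deleteEdge_of_ne hyw]; omega)
  · rw [indeg_suppress_of_unique hparwM₁ hchwM₁ hq'w' hxw hq'x (Finset.ne_of_mem_erase hv),
      indeg_deleteEdge_of_ne (Finset.ne_of_mem_erase hv)]
  · rw [outdeg_suppress_of_unique hparwM₁ hchwM₁ hq'w' hxw hq'x (Finset.ne_of_mem_erase hv),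
      outdeg_deleteEdge_of_ne hvp]
  · rcases (hM u v).mp h with ⟨h, -⟩ | ⟨rfl, rfl⟩
    exacts [.single h, .tail (.single hq'w) hwx]

theorem orchard_of_treeChild (N : PNet) (hbin : N.IsBinary) (htc : N.TreeChild) :
    N.Orchard := by
  induction hn : N.verts.card using Nat.strong_induction_on generalizing N with
  | _ n ih =>
    have step : (∃ N', N.Reduce N' ∧ N'.IsBinary ∧ N'.TreeChild ∧
        N'.verts.card < N.verts.card) → N.Orchard := by
      rintro ⟨N', hred, hbin', htc', hlt⟩
      obtain ⟨T, hT, hN'T⟩ := ih _ (hn ▸ hlt) N' hbin' htc' rfl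
      exact ⟨T, hT, hN'T.head hred⟩
    rcases exists_isCherry_or_isRetCherry hbin htc with ⟨x, y, p, hc⟩ | ⟨x, y, w, p, hc⟩
    · by_cases hp : N.indeg p = 0
      · exact hc.orchard_of_indeg_eq_zero hbin hp
      · obtain ⟨q, hq⟩ := exists_adj_of_indeg_ne_zero hp
        exact step (hc.exists_reduce hbin htc hq)
    · exact step (hc.exists_reduce hbin htc)

end PNet

open PNet in
/-- For a binary level-1 network (every blob contains at most one reticulation
node): it is tree-child iff it is stack-free, and it is orchard. -/
theorem stmt18 (N : PNet) (hbin : N.IsBinary)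
    (hlvl : ∀ B ∈ N.Blobs, N.blobLevel B ≤ 1) :
    (N.TreeChild ↔ N.StackFree) ∧ N.Orchard := by
  have htc := treeChild_of_level_le_one hbin hlvl
  exact ⟨iff_of_true htc (htc.stackFree hbin), orchard_of_treeChild N hbin htc⟩
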